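/- arXiv:2101.00838 — 2 statements merged into one kernel-verified Lean document; each statement's English description precedes it below -/
import Mathlib

section
/- For every positive integer 𝒦 and every z ∈ Z, g(z,𝒦) − g(z) ≤ 2 (ℛ_max − ℛ_min) / 𝒦 (and g(z,𝒦) ≥ g(z)); consequently g(z,𝒦) converges to g(z) as 𝒦 → ∞, uniformly with respect to z ∈ Z. -/
/-!
For fixed `z, ξ` the map `η ↦ φ(η,z,ξ) = (η − zᵀξ)₊ − (η − z₀ᵀξ)₊` is monotone, nondecreasing when
`zᵀξ ≤ z₀ᵀξ` and nonincreasing otherwise, and it grows by at most `b − a` from `a` to `b ≥ a`.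
So its supremum over a sub-interval `[a, b]` is `max (φ a) (φ b)`, which dominates `φ η` for
`η ∈ [a, b]` and is at most `φ a + (b − a)`. Integrating against `P ∈ 𝒬` and taking suprema over
`P` and over the sub-intervals, whose left endpoints lie in `ℛ`, gives
`g(z) ≤ g(z,𝒦) ≤ g(z) + (ℛ_max − ℛ_min)/𝒦` for every `z`, whence the uniform convergence.
-/

open MeasureTheory Metric Set Filter
open scoped ENNReal NNReal

noncomputable section

abbrev Vec (n : ℕ) := EuclideanSpace ℝ (Fin n)

/-- zᵀξ -/
def dotp {n : ℕ} (z ξ : Vec n) : ℝ := ∑ i, z i * ξ i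

/-- φ(η,z,ξ) = (η − zᵀξ)₊ − (η − z₀ᵀξ)₊ -/
def phi {n : ℕ} (z₀ : Vec n) (η : ℝ) (z ξ : Vec n) : ℝ :=
  max (η - dotp z ξ) 0 - max (η - dotp z₀ ξ) 0

/-- P is a Borel probability measure supported on Ξ with finite first moment. -/
def MemP {n : ℕ} (Ξ : Set (Vec n)) (P : Measure (Vec n)) : Prop :=
  IsProbabilityMeasure P ∧ P Ξᶜ = 0 ∧ Integrable (fun ξ => ‖ξ‖) P

/-- Kantorovich (1-Wasserstein) metric: supremum over 1-Lipschitz test functions. -/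
def dK {n : ℕ} (P Q : Measure (Vec n)) : ℝ :=
  ⨆ h : {h : Vec n → ℝ // LipschitzWith 1 h},
    |∫ ξ, h.1 ξ ∂P - ∫ ξ, h.1 ξ ∂Q|

/-- Empirical distribution P̂_N = (1/N) ∑ᵢ δ_{ξ̂ᵢ}. -/
def empirical {n N : ℕ} (s : Fin N → Vec n) : Measure (Vec n) :=
  (N : ℝ≥0∞)⁻¹ • ∑ i, Measure.dirac (s i)

/-- Wasserstein ball of radius ε around Phat, of probability measures supported on Ξ. -/
def wball {n : ℕ} (Ξ : Set (Vec n)) (Phat : Measure (Vec n)) (ε : ℝ) :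
    Set (Measure (Vec n)) :=
  {P | MemP Ξ P ∧ dK P Phat ≤ ε}

/-- w(z) = sup_{η∈R} sup_{P∈Q} E_P[φ(η,z,ξ)]. -/
def wFun {n : ℕ} (R : Set ℝ) (Q : Set (Measure (Vec n))) (z₀ z : Vec n) : ℝ :=
  sSup {r | ∃ η ∈ R, ∃ P ∈ Q, r = ∫ ξ, phi z₀ η z ξ ∂P}

/-- deviation 𝔻(A,B) = sup_{x∈A} dist(x,B). -/
def dev {X : Type*} [PseudoMetricSpace X] (A B : Set X) : ℝ :=
  sSup ((fun x => infDist x B) '' A)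

/-- Hausdorff distance ℍ(A,B) = max{𝔻(A,B), 𝔻(B,A)}. -/
def hdistP {X : Type*} [PseudoMetricSpace X] (A B : Set X) : ℝ :=
  max (dev A B) (dev B A)

/-- Z is a polyhedral set. -/
def IsPolyhedral {n : ℕ} (Z : Set (Vec n)) : Prop :=
  ∃ (m : ℕ) (A : Fin m → Vec n) (b : Fin m → ℝ), Z = {z | ∀ i, dotp (A i) z ≤ b i}


/-- sup_{η ∈ [a,b]} φ(η,z,ξ) -/
def phiSup {n : ℕ} (z₀ z : Vec n) (a b : ℝ) (ξ : Vec n) : ℝ :=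
  sSup ((fun η => phi z₀ η z ξ) '' Set.Icc a b)

/-- g(z,𝒦) = max_{1≤k≤𝒦} sup_{P∈𝒬} E_P[ sup_{η∈[η̲ₖ,η̄ₖ]} φ(η,z,ξ) ], where
[η̲ₖ,η̄ₖ], k = 1,…,𝒦, are the 𝒦 equal sub-intervals of [ℛ_min, ℛ_max]. -/
def gSplit {n : ℕ} (Q : Set (Measure (Vec n))) (z₀ : Vec n) (Rmin Rmax : ℝ) (K : ℕ)
    (z : Vec n) : ℝ :=
  sSup {r : ℝ | ∃ k < K, ∃ P ∈ Q,
    r = ∫ ξ, phiSup z₀ z (Rmin + k * (Rmax - Rmin) / K)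
        (Rmin + (k + 1) * (Rmax - Rmin) / K) ξ ∂P}

-- Also valid when `S` or `T` is empty or unbounded above, where `sSup` is `0`; hence `0 ≤ c`.
lemma Real.sSup_mem_Icc_of_forall_exists_le {S T : Set ℝ} {c : ℝ} (hc : 0 ≤ c)
    (hST : ∀ s ∈ S, ∃ t ∈ T, s ≤ t) (hTS : ∀ t ∈ T, ∃ s ∈ S, t ≤ s + c) :
    sSup T ∈ Icc (sSup S) (sSup S + c) := by
  rcases T.eq_empty_or_nonempty with rfl | hT
  · have : S = ∅ := eq_empty_of_forall_notMem fun s hs => by simpa using hST s hs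
    simp [this, hc]
  have hS : S.Nonempty :=
    let ⟨t, ht⟩ := hT
    let ⟨s, hs, _⟩ := hTS t ht
    ⟨s, hs⟩
  by_cases hTb : BddAbove T
  · have hSb : BddAbove S :=
      let ⟨M, hM⟩ := hTb
      ⟨M, fun s hs => let ⟨t, ht, hst⟩ := hST s hs; hst.trans (hM ht)⟩
    refine ⟨csSup_le hS fun s hs => ?_, csSup_le hT fun t ht => ?_⟩
    · obtain ⟨t, ht, hst⟩ := hST s hs
      exact hst.trans (le_csSup hTb ht)
    · obtain ⟨s, hs, hts⟩ := hTS t ht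
      linarith [le_csSup hSb hs]
  · have hSb : ¬BddAbove S := fun ⟨M, hM⟩ =>
      hTb ⟨M + c, fun t ht => let ⟨s, hs, hts⟩ := hTS t ht; hts.trans (by linarith [hM hs])⟩
    simp [hTb, hSb, hc]

lemma isGreatest_image_Icc_max {α β : Type*} [LinearOrder α] [LinearOrder β] {f : α → β}
    (hf : Monotone f ∨ Antitone f) {a b : α} (hab : a ≤ b) :
    IsGreatest (f '' Icc a b) (max (f a) (f b)) := by
  rcases hf with hf | hf
  · rw [max_eq_right (hf hab)]
    exact hf.map_isGreatest (isGreatest_Icc hab)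
  · rw [max_eq_left (hf hab)]
    exact hf.map_isLeast (isLeast_Icc hab)

lemma exists_mem_Icc_uniform_partition {a b t : ℝ} {K : ℕ} (hK : 0 < K) (ht : t ∈ Icc a b) :
    ∃ k < K, t ∈ Icc (a + k * (b - a) / K) (a + (k + 1) * (b - a) / K) := by
  classical
  have hlast : t ≤ a + ((K - 1 : ℕ) + 1) * (b - a) / K := by
    rw [Nat.cast_sub hK, Nat.cast_one, sub_add_cancel, mul_div_cancel_left₀ _ (by positivity)]
    linarith [ht.2]
  have hex : ∃ k : ℕ, t ≤ a + (k + 1) * (b - a) / K := ⟨K - 1, hlast⟩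
  refine ⟨Nat.find hex, (Nat.find_min' hex hlast).trans_lt (Nat.sub_lt hK one_pos), ?_,
    Nat.find_spec hex⟩
  cases hk : Nat.find hex with
  | zero => simpa using ht.1
  | succ j =>
    have := Nat.find_min hex (by omega : j < Nat.find hex)
    push_cast
    linarith

lemma monotone_max_sub_zero_sub_max_sub_zero {x y : ℝ} (h : x ≤ y) :
    Monotone fun t : ℝ => max (t - x) 0 - max (t - y) 0 := by
  intro s t hst
  simp only [max_def]
  split_ifs <;> linarith

section Phi

variable {n : ℕ} (z₀ z ξ : Vec n) {a b η : ℝ}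

lemma dotp_eq_inner : dotp z ξ = inner ℝ z ξ := by
  simp [dotp, PiLp.inner_apply, mul_comm]

lemma phi_monotone_or_antitone :
    Monotone (fun η => phi z₀ η z ξ) ∨ Antitone (fun η => phi z₀ η z ξ) := by
  rcases le_total (dotp z ξ) (dotp z₀ ξ) with h | h
  · exact Or.inl (monotone_max_sub_zero_sub_max_sub_zero h)
  · refine Or.inr fun s t hst => ?_
    have := monotone_max_sub_zero_sub_max_sub_zero h hst
    simp only [phi] at this ⊢
    linarith

lemma phiSup_eq_max (hab : a ≤ b) :
    phiSup z₀ z a b ξ = max (phi z₀ a z ξ) (phi z₀ b z ξ) :=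
  (isGreatest_image_Icc_max (phi_monotone_or_antitone z₀ z ξ) hab).csSup_eq

lemma phi_le_phiSup (hη : η ∈ Icc a b) : phi z₀ η z ξ ≤ phiSup z₀ z a b ξ := by
  have hab := hη.1.trans hη.2
  rw [phiSup_eq_max z₀ z ξ hab]
  exact (isGreatest_image_Icc_max (phi_monotone_or_antitone z₀ z ξ) hab).2
    (mem_image_of_mem _ hη)

lemma phi_le_phi_add (hab : a ≤ b) : phi z₀ b z ξ ≤ phi z₀ a z ξ + (b - a) := by
  have h₁ : max (b - dotp z ξ) 0 ≤ max (a - dotp z ξ) 0 + (b - a) :=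
    max_le (by linarith [le_max_left (a - dotp z ξ) 0])
      (by linarith [le_max_right (a - dotp z ξ) 0])
  have h₂ : max (a - dotp z₀ ξ) 0 ≤ max (b - dotp z₀ ξ) 0 := max_le_max (by linarith) le_rfl
  simp only [phi]
  linarith

lemma phiSup_le_phi_add (hab : a ≤ b) : phiSup z₀ z a b ξ ≤ phi z₀ a z ξ + (b - a) := by
  rw [phiSup_eq_max z₀ z ξ hab]
  exact max_le (by linarith) (phi_le_phi_add z₀ z ξ hab)

lemma abs_phi_le : |phi z₀ η z ξ| ≤ ‖z - z₀‖ * ‖ξ‖ :=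
  calc |phi z₀ η z ξ| ≤ |(η - dotp z ξ) - (η - dotp z₀ ξ)| := abs_max_sub_max_le_abs _ _ _
    _ = |inner ℝ (z - z₀) ξ| := by
      rw [inner_sub_left, ← dotp_eq_inner, ← dotp_eq_inner, abs_sub_comm]
      ring_nf
    _ ≤ ‖z - z₀‖ * ‖ξ‖ := abs_real_inner_le_norm _ _

lemma continuous_phi : Continuous fun ξ => phi z₀ η z ξ := by
  unfold phi dotp
  fun_prop

end Phi

section Integral

variable {n : ℕ} (z₀ z : Vec n) {P : Measure (Vec n)} {a b η : ℝ}

lemma integrable_phi (hP : Integrable (fun ξ => ‖ξ‖) P) : Integrable (fun ξ => phi z₀ η z ξ) P :=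
  (hP.const_mul ‖z - z₀‖).mono' (continuous_phi z₀ z).aestronglyMeasurable
    (ae_of_all _ fun ξ => (Real.norm_eq_abs _).trans_le (abs_phi_le z₀ z ξ))

lemma integrable_phiSup (hP : Integrable (fun ξ => ‖ξ‖) P) (hab : a ≤ b) :
    Integrable (phiSup z₀ z a b) P := by
  have : phiSup z₀ z a b = (fun ξ => phi z₀ a z ξ) ⊔ (fun ξ => phi z₀ b z ξ) :=
    funext fun ξ => phiSup_eq_max z₀ z ξ hab
  rw [this]
  exact (integrable_phi z₀ z hP).sup (integrable_phi z₀ z hP)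

lemma integral_phi_le_integral_phiSup (hP : Integrable (fun ξ => ‖ξ‖) P) (hη : η ∈ Icc a b) :
    ∫ ξ, phi z₀ η z ξ ∂P ≤ ∫ ξ, phiSup z₀ z a b ξ ∂P :=
  integral_mono (integrable_phi z₀ z hP) (integrable_phiSup z₀ z hP (hη.1.trans hη.2))
    fun ξ => phi_le_phiSup z₀ z ξ hη

lemma integral_phiSup_le [IsProbabilityMeasure P] (hP : Integrable (fun ξ => ‖ξ‖) P)
    (hab : a ≤ b) :
    ∫ ξ, phiSup z₀ z a b ξ ∂P ≤ ∫ ξ, phi z₀ a z ξ ∂P + (b - a) :=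
  calc ∫ ξ, phiSup z₀ z a b ξ ∂P ≤ ∫ ξ, (phi z₀ a z ξ + (b - a)) ∂P :=
        integral_mono (integrable_phiSup z₀ z hP hab)
          ((integrable_phi z₀ z hP).add (integrable_const _))
          fun ξ => phiSup_le_phi_add z₀ z ξ hab
    _ = ∫ ξ, phi z₀ a z ξ ∂P + (b - a) := by
        rw [integral_add (integrable_phi z₀ z hP) (integrable_const _), integral_const]
        simp

end Integral

lemma gSplit_mem_Icc_wFun {n : ℕ} {Q : Set (Measure (Vec n))}
    (hQ : ∀ P ∈ Q, IsProbabilityMeasure P ∧ Integrable (fun ξ => ‖ξ‖) P)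
    {Rmin Rmax : ℝ} (hR : Rmin ≤ Rmax) {K : ℕ} (hK : 0 < K) (z₀ z : Vec n) :
    gSplit Q z₀ Rmin Rmax K z ∈
      Icc (wFun (Icc Rmin Rmax) Q z₀ z) (wFun (Icc Rmin Rmax) Q z₀ z + (Rmax - Rmin) / K) := by
  have hK' : (0 : ℝ) < K := Nat.cast_pos.mpr hK
  have hstep : 0 ≤ (Rmax - Rmin) / K := div_nonneg (sub_nonneg.mpr hR) hK'.le
  apply Real.sSup_mem_Icc_of_forall_exists_le hstep
  · rintro _ ⟨η, hη, P, hP, rfl⟩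
    obtain ⟨k, hk, hηk⟩ := exists_mem_Icc_uniform_partition hK hη
    exact ⟨_, ⟨k, hk, P, hP, rfl⟩, integral_phi_le_integral_phiSup z₀ z (hQ P hP).2 hηk⟩
  · rintro _ ⟨k, hk, P, hP, rfl⟩
    obtain ⟨hPprob, hPint⟩ := hQ P hP
    have hkK : (k : ℝ) * (Rmax - Rmin) / K ≤ Rmax - Rmin := by
      rw [div_le_iff₀ hK', mul_comm (Rmax - Rmin)]
      exact mul_le_mul_of_nonneg_right (Nat.cast_le.mpr hk.le) (sub_nonneg.mpr hR)
    have hlen : Rmin + (k + 1) * (Rmax - Rmin) / K - (Rmin + k * (Rmax - Rmin) / K) =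
        (Rmax - Rmin) / K := by ring
    have hk0 : 0 ≤ (k : ℝ) * (Rmax - Rmin) / K :=
      div_nonneg (mul_nonneg k.cast_nonneg (sub_nonneg.mpr hR)) hK'.le
    refine ⟨_, ⟨Rmin + k * (Rmax - Rmin) / K, ⟨by linarith, by linarith⟩, P, hP, rfl⟩, ?_⟩
    rw [← hlen]
    exact integral_phiSup_le z₀ z hPint (by linarith)

lemma tendstoUniformlyOn_of_eventually_dist_le {ι α β : Type*} [PseudoMetricSpace β]
    {F : ι → α → β} {f : α → β} {l : Filter ι} {s : Set α} {u : ι → ℝ}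
    (hu : Tendsto u l (nhds 0)) (h : ∀ᶠ i in l, ∀ x ∈ s, dist (f x) (F i x) ≤ u i) :
    TendstoUniformlyOn F f l s :=
  Metric.tendstoUniformlyOn_iff.mpr fun δ hδ => by
    filter_upwards [h, hu.eventually (gt_mem_nhds hδ)] with i hi hδi x hx
    exact (hi x hx).trans_lt hδi

theorem stmt7_general {n N : ℕ}
    (Ξ : Set (Vec n))
    (Z : Set (Vec n))
    (z₀ : Vec n)
    (Rmin Rmax : ℝ) (hRmm : Rmin ≤ Rmax)
    (samples : Fin N → Vec n)
    (ε : ℝ)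
    (Q : Set (Measure (Vec n))) (hQ : Q = wball Ξ (empirical samples) ε)
    (g : Vec n → ℝ) (hg : g = wFun (Set.Icc Rmin Rmax) Q z₀) :
    (∀ K : ℕ, 1 ≤ K → ∀ z ∈ Z,
      g z ≤ gSplit Q z₀ Rmin Rmax K z ∧
      gSplit Q z₀ Rmin Rmax K z - g z ≤ 2 * (Rmax - Rmin) / K) ∧
    TendstoUniformlyOn (fun (K : ℕ) (z : Vec n) => gSplit Q z₀ Rmin Rmax K z) g
      Filter.atTop Z := by
  subst hQ hg
  have hQ : ∀ P ∈ wball Ξ (empirical samples) ε,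
      IsProbabilityMeasure P ∧ Integrable (fun ξ => ‖ξ‖) P := fun P hP => ⟨hP.1.1, hP.1.2.2⟩
  have hbound := fun K (hK : 1 ≤ K) z => gSplit_mem_Icc_wFun hQ hRmm hK z₀ z
  refine ⟨fun K hK z _ => ⟨(hbound K hK z).1, ?_⟩, ?_⟩
  · have hgap : (Rmax - Rmin) / K ≤ 2 * (Rmax - Rmin) / K := by
      rw [mul_div_assoc]
      linarith [div_nonneg (sub_nonneg.mpr hRmm) (Nat.cast_nonneg K)]
    linarith [(hbound K hK z).2]
  · refine tendstoUniformlyOn_of_eventually_dist_le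
      (tendsto_const_div_atTop_nhds_zero_nat (Rmax - Rmin)) ?_
    filter_upwards [eventually_ge_atTop 1] with K hK z _
    obtain ⟨hlow, hup⟩ := hbound K hK z
    rw [Real.dist_eq, abs_le]
    constructor <;> linarith

/-- For every positive integer 𝒦 and every z ∈ Z: g(z) ≤ g(z,𝒦) and
g(z,𝒦) − g(z) ≤ 2(ℛ_max − ℛ_min)/𝒦; consequently g(·,𝒦) → g(·) uniformly on Z as
𝒦 → ∞. -/
theorem stmt7 {n N l : ℕ}
    (C : Fin l → Vec n) (dv : Fin l → ℝ)
    (Ξ : Set (Vec n)) (hΞ : Ξ = {ξ | ∀ i, dotp (C i) ξ ≤ dv i})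
    (Z : Set (Vec n)) (hZpoly : IsPolyhedral Z) (hZbdd : Bornology.IsBounded Z)
    (z₀ : Vec n) (hz₀ : z₀ ∈ Z)
    (Rmin Rmax : ℝ) (hRmm : Rmin ≤ Rmax)
    (hR : (fun ξ => dotp z₀ ξ) '' Ξ = Set.Icc Rmin Rmax)
    (samples : Fin N → Vec n) (hs : ∀ i, samples i ∈ Ξ)
    (ε : ℝ) (hε : 0 < ε)
    (Q : Set (Measure (Vec n))) (hQ : Q = wball Ξ (empirical samples) ε)
    (g : Vec n → ℝ) (hg : g = wFun (Set.Icc Rmin Rmax) Q z₀) :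
    (∀ K : ℕ, 1 ≤ K → ∀ z ∈ Z,
      g z ≤ gSplit Q z₀ Rmin Rmax K z ∧
      gSplit Q z₀ Rmin Rmax K z - g z ≤ 2 * (Rmax - Rmin) / K) ∧
    TendstoUniformlyOn (fun (K : ℕ) (z : Vec n) => gSplit Q z₀ Rmin Rmax K z) g
      Filter.atTop Z :=
  stmt7_general Ξ Z z₀ Rmin Rmax hRmm samples ε Q hQ g hg
end
end

section
/- Let (X, d) be a metric space, f : X → ℝ Lipschitz continuous with modulus L_f, and F, F′ ⊆ X nonempty closed sets admitting metric projections (every point of X has a nearest point in F and in F′). Let v = inf_{x∈F} f be attained with optimal solution set S ≠ ∅, and suppose the second-order growth condition holds: there exists ρ > 0 with f(x) − v ≥ ρ · dist(x, S)² for all x ∈ F. If h := ℍ(F′, F) ≤ 1, then every minimizer x′ of f over F′ satisfies dist(x′, S) ≤ (1 + √(2 L_f / ρ)) · √h. -/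
/-!
Project a minimizer `x'` of `f` over `F'` to a point `x ∈ F` at distance at most `h`, and
a solution `s ∈ S` to a point `y' ∈ F'` at distance at most `h`. Two Lipschitz estimates give
`f x ≤ f x' + L h ≤ f y' + L h ≤ f s + 2 L h = v + 2 L h`, so the growth condition puts `x`
within `√(2 L h / ρ)` of `S`, and `x'` is within `h ≤ √h` of `x`.
-/

open Metric Set

lemma exists_mem_dist_le_hausdorffDist {X : Type*} [PseudoMetricSpace X] {A B : Set X}
    (hproj : ∀ x, ∃ y ∈ B, dist x y = infDist x B) (hfin : hausdorffEDist A B ≠ ⊤)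
    {x : X} (hx : x ∈ A) : ∃ y ∈ B, dist x y ≤ hausdorffDist A B := by
  obtain ⟨y, hy, hxy⟩ := hproj x
  exact ⟨y, hy, hxy ▸ infDist_le_hausdorffDist_of_mem hx hfin⟩

lemma infDist_le_sqrt_of_growth {X : Type*} [PseudoMetricSpace X] {f : X → ℝ} {F S : Set X}
    {v ρ c : ℝ} (hρ : 0 < ρ) (hgrowth : ∀ x ∈ F, ρ * infDist x S ^ 2 ≤ f x - v)
    {x : X} (hx : x ∈ F) (hfx : f x ≤ v + c) : infDist x S ≤ √(c / ρ) := by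
  have hsq : infDist x S ^ 2 ≤ c / ρ := by
    rw [le_div_iff₀ hρ]
    linarith [hgrowth x hx]
  simpa [abs_of_nonneg infDist_nonneg] using Real.abs_le_sqrt hsq

theorem stmt15_general {X : Type*} [MetricSpace X] (f : X → ℝ) (Lf : NNReal)
    (hf : LipschitzWith Lf f)
    (F F' : Set X)
    (hproj : ∀ x : X, ∃ y ∈ F, dist x y = infDist x F)
    (hproj' : ∀ x : X, ∃ y ∈ F', dist x y = infDist x F')
    (v : ℝ)
    (S : Set X) (hS : S = {x ∈ F | f x = v}) (hSne : S.Nonempty)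
    (ρ : ℝ) (hρ : 0 < ρ)
    (hgrowth : ∀ x ∈ F, ρ * (infDist x S) ^ 2 ≤ f x - v)
    (hfin : EMetric.hausdorffEdist F' F ≠ ⊤)
    (hle : Metric.hausdorffDist F' F ≤ 1) :
    ∀ x' ∈ F', (∀ y ∈ F', f x' ≤ f y) →
      infDist x' S ≤
        (1 + Real.sqrt (2 * (Lf : ℝ) / ρ)) * Real.sqrt (Metric.hausdorffDist F' F) := by
  intro x' hx' hmin
  obtain ⟨s, hsF, hfs⟩ : ∃ s ∈ F, f s = v := by
    obtain ⟨s, hs⟩ := hSne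
    exact ⟨s, by simpa [hS] using hs⟩
  obtain ⟨x, hxF, hx'x⟩ := exists_mem_dist_le_hausdorffDist hproj hfin hx'
  obtain ⟨y', hy', hsy'⟩ :=
    exists_mem_dist_le_hausdorffDist hproj' (hausdorffEDist_comm.trans_ne hfin) hsF
  rw [hausdorffDist_comm] at hsy'
  set h := hausdorffDist F' F
  have hfx : f x ≤ v + 2 * (Lf : ℝ) * h := calc
    f x ≤ f x' + Lf * dist x x' := hf.le_add_mul x x'
    _ ≤ f s + Lf * dist y' s + Lf * dist x x' := by
      linarith [hmin y' hy', hf.le_add_mul y' s]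
    _ ≤ v + 2 * Lf * h := by
      rw [hfs, dist_comm x, dist_comm y']
      linarith [mul_le_mul_of_nonneg_left hsy' Lf.coe_nonneg,
        mul_le_mul_of_nonneg_left hx'x Lf.coe_nonneg]
  have hxS : infDist x S ≤ √(2 * Lf / ρ) * √h := by
    rw [← Real.sqrt_mul (by positivity), div_mul_eq_mul_div]
    exact infDist_le_sqrt_of_growth hρ hgrowth hxF hfx
  calc infDist x' S ≤ infDist x S + dist x' x := infDist_le_infDist_add_dist
    _ ≤ √h + √(2 * Lf / ρ) * √h := by linarith [Real.le_sqrt_self_iff.mpr hle]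
    _ = (1 + √(2 * Lf / ρ)) * √h := by ring

/-- If f is Lipschitz with modulus L_f on a metric space, F and F′ are nonempty closed
sets admitting metric projections, v = inf_F f is attained with optimal solution set
S ≠ ∅, the second-order growth condition holds on F with constant ρ > 0, and
h = ℍ(F′,F) ≤ 1, then every minimizer x′ of f over F′ satisfies
dist(x′, S) ≤ (1 + √(2 L_f/ρ)) √h. -/
theorem stmt15 {X : Type*} [MetricSpace X] (f : X → ℝ) (Lf : NNReal)
    (hf : LipschitzWith Lf f)
    (F F' : Set X) (hFne : F.Nonempty) (hF'ne : F'.Nonempty)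
    (hFcl : IsClosed F) (hF'cl : IsClosed F')
    (hproj : ∀ x : X, ∃ y ∈ F, dist x y = infDist x F)
    (hproj' : ∀ x : X, ∃ y ∈ F', dist x y = infDist x F')
    (v : ℝ) (hv : v = sInf (f '' F))
    (S : Set X) (hS : S = {x ∈ F | f x = v}) (hSne : S.Nonempty)
    (ρ : ℝ) (hρ : 0 < ρ)
    (hgrowth : ∀ x ∈ F, ρ * (infDist x S) ^ 2 ≤ f x - v)
    (hfin : EMetric.hausdorffEdist F' F ≠ ⊤)
    (hle : Metric.hausdorffDist F' F ≤ 1) :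
    ∀ x' ∈ F', (∀ y ∈ F', f x' ≤ f y) →
      infDist x' S ≤
        (1 + Real.sqrt (2 * (Lf : ℝ) / ρ)) * Real.sqrt (Metric.hausdorffDist F' F) :=
  stmt15_general f Lf hf F F' hproj hproj' v S hS hSne ρ hρ hgrowth hfin hle
end
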